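/- Let ψ be a unit vector in ℂⁿ ⊗ ℂⁿ with Schmidt coefficients λ₁, …, λₙ ≥ 0. Then the supremum of |⟨φ, ψ⟩|² over all maximally entangled unit vectors φ in ℂⁿ ⊗ ℂⁿ equals (1/n)(Σᵢ λᵢ)² = (1/n) Σ_{i,j} λᵢ λⱼ, and this supremum is attained. -/

import Mathlib

open Matrix
open scoped ComplexOrder

noncomputable section

/-- The Schmidt coefficients (unsorted) of the unit vector `ψ = Σ_{i,j} M i j • eᵢ ⊗ eⱼ`
of `ℂⁿ ⊗ ℂⁿ`, i.e. the singular values of its coefficient matrix `M`: the square roots of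
the eigenvalues of `M Mᴴ`. -/
def schmidtCoeffs {n : ℕ} (M : Matrix (Fin n) (Fin n) ℂ) : Fin n → ℝ := fun i =>
  Real.sqrt ((Matrix.posSemidef_self_mul_conjTranspose M).isHermitian.eigenvalues i)

lemma schmidt_decomp {n : ℕ} (M : Matrix (Fin n) (Fin n) ℂ) :
    ∃ P W : Matrix (Fin n) (Fin n) ℂ, P * Pᴴ = 1 ∧ Pᴴ * P = 1 ∧ W * Wᴴ = 1 ∧ Wᴴ * W = 1 ∧
      M = P * diagonal (fun i => (schmidtCoeffs M i : ℂ)) * W := by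
  have hP := Matrix.posSemidef_self_mul_conjTranspose M
  set hH := hP.isHermitian with hHdef
  set Uc : Matrix (Fin n) (Fin n) ℂ := (hH.eigenvectorUnitary : Matrix (Fin n) (Fin n) ℂ) with hUc
  have hUc1 : Uc * star Uc = 1 := (Matrix.mem_unitaryGroup_iff).mp hH.eigenvectorUnitary.2
  have hUc2 : star Uc * Uc = 1 := (Matrix.mem_unitaryGroup_iff').mp hH.eigenvectorUnitary.2
  set lam : Fin n → ℝ := schmidtCoeffs M with hlamdef
  have hlam_nonneg : ∀ i, 0 ≤ lam i := fun i => Real.sqrt_nonneg _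
  have hev : ∀ i, hH.eigenvalues i = lam i ^ 2 := fun i =>
    (Real.sq_sqrt (hP.eigenvalues_nonneg i)).symm
  set B : Matrix (Fin n) (Fin n) ℂ := star Uc * M with hB
  have hBB : B * Bᴴ = diagonal (fun i => ((lam i : ℂ)) ^ 2) := by
    have h1 : B * Bᴴ = star Uc * (M * Mᴴ) * Uc := by
      rw [hB, conjTranspose_mul, Matrix.star_eq_conjTranspose, conjTranspose_conjTranspose]
      noncomm_ring
    rw [h1, show star Uc * (M * Mᴴ) * Uc = diagonal (RCLike.ofReal ∘ hH.eigenvalues) from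
      by have h := hH.conjStarAlgAut_star_eigenvectorUnitary; simpa [Unitary.conjStarAlgAut_apply] using h]
    have : (RCLike.ofReal ∘ hH.eigenvalues : Fin n → ℂ) = fun i => ((lam i : ℂ)) ^ 2 := by
      funext i; simp [hev i]
    rw [this]
  classical
  have hBBapp : ∀ i k, ∑ j, B k j * star (B i j)
      = if i = k then ((lam i : ℂ)) ^ 2 else 0 := by
    intro i k
    have h := congrFun (congrFun hBB k) i
    rw [Matrix.mul_apply] at h
    simp only [conjTranspose_apply, diagonal_apply] at h
    rw [h]
    by_cases h2 : k = i
    · subst h2; simp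
    · rw [if_neg h2, if_neg (fun hh => h2 hh.symm)]
  have hrow : ∀ i j, lam i = 0 → B i j = 0 := by
    intro i j h0
    have h1 : ∑ x, B i x * star (B i x) = 0 := by
      rw [hBBapp i i]; simp [h0]
    have h2 : ∑ x, (Complex.normSq (B i x) : ℂ) = 0 := by
      rw [← h1]; exact Finset.sum_congr rfl fun x _ => (Complex.mul_conj _).symm
    rw [← Complex.ofReal_sum, Complex.ofReal_eq_zero] at h2
    have h3 := (Finset.sum_eq_zero_iff_of_nonneg
      (fun x _ => Complex.normSq_nonneg (B i x))).mp h2 j (Finset.mem_univ j)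
    exact Complex.normSq_eq_zero.mp h3
  set s : Set (Fin n) := {i | lam i ≠ 0} with hs
  set v : Fin n → EuclideanSpace ℂ (Fin n) :=
    fun i => (WithLp.equiv 2 _).symm (fun j => ((lam i : ℂ))⁻¹ * B i j) with hv
  have hortho : Orthonormal ℂ (s.restrict v) := by
    rw [orthonormal_iff_ite]
    rintro ⟨i, hi⟩ ⟨k, hk⟩
    simp only [Set.restrict_apply, hv, PiLp.inner_apply, RCLike.inner_apply,
      WithLp.equiv_symm_apply, PiLp.toLp_apply, starRingEnd_apply, star_mul', Subtype.mk.injEq]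
    change ∑ x, ((lam k : ℂ))⁻¹ * B k x * star (((lam i : ℂ))⁻¹ * B i x) = if i = k then 1 else 0
    simp only [star_mul']
    have hconj : ∀ j, ((lam k : ℂ))⁻¹ * B k j *
        (star ((lam i : ℂ))⁻¹ * star (B i j))
        = ((lam i : ℂ))⁻¹ * ((lam k : ℂ))⁻¹ * (B k j * star (B i j)) := by
      intro j
      rw [star_inv₀, show star ((lam i : ℂ)) = ((lam i : ℂ)) from Complex.conj_ofReal _]
      ring
    rw [Finset.sum_congr rfl fun j _ => hconj j, ← Finset.mul_sum, hBBapp i k]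
    by_cases h : i = k
    · subst h
      simp only [if_pos rfl, if_pos rfl, if_pos trivial]
      have hi' : (lam i : ℂ) ≠ 0 := by
        simpa [hs] using hi
      field_simp
    · simp [h]
  obtain ⟨b, hb⟩ := hortho.exists_orthonormalBasis_extension_of_card_eq (by simp)
  set W : Matrix (Fin n) (Fin n) ℂ := fun i j => b i j with hWdef
  have hWW : W * Wᴴ = 1 := by
    ext i k
    have hbo := (orthonormal_iff_ite.mp b.orthonormal) k i
    simp only [PiLp.inner_apply, RCLike.inner_apply, starRingEnd_apply] at hbo
    rw [Matrix.mul_apply]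
    simp only [conjTranspose_apply, hWdef, Matrix.one_apply]
    change ∑ x, b i x * star (b k x) = _
    rw [hbo]
    by_cases h : i = k <;> simp [h, eq_comm]
  have hW'W : Wᴴ * W = 1 := mul_eq_one_comm.mp hWW
  have hDWB : diagonal (fun i => ((lam i : ℂ))) * W = B := by
    ext i j
    rw [Matrix.diagonal_mul]
    by_cases h : lam i = 0
    · simp [h, hrow i j h]
    · have hbi : b i = v i := hb i h
      have : W i j = ((lam i : ℂ))⁻¹ * B i j := by
        rw [hWdef]
        simp only [hbi, hv, WithLp.equiv_symm_apply, PiLp.toLp_apply]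
      rw [this, ← mul_assoc, mul_inv_cancel₀ (by simpa using h), one_mul]
  refine ⟨Uc, W, ?_, ?_, ?_, ?_, ?_⟩
  · rwa [← Matrix.star_eq_conjTranspose]
  · rwa [← Matrix.star_eq_conjTranspose]
  · exact hWW
  · exact hW'W
  · rw [mul_assoc, hDWB, hB, ← mul_assoc, hUc1, one_mul]

/-- Let `ψ` be a unit vector of `ℂⁿ ⊗ ℂⁿ` with coefficient matrix `M` (so `tr (Mᴴ M) = 1`)
and Schmidt coefficients `λᵢ`.  A vector `φ` with coefficient matrix `N` is a maximally
entangled unit vector iff its reduced density matrix on the first factor satisfies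
`N Nᴴ = (1/n)·1`, and then `⟨φ, ψ⟩ = tr (Nᴴ M)`.  The supremum of `|⟨φ, ψ⟩|²` over all
maximally entangled unit vectors `φ` equals `(1/n)(Σᵢ λᵢ)²` and is attained. -/
theorem stmt4 {n : ℕ} (hn : 0 < n) (M : Matrix (Fin n) (Fin n) ℂ)
    (hunit : (Mᴴ * M).trace = 1) :
    IsGreatest
      {r : ℝ | ∃ N : Matrix (Fin n) (Fin n) ℂ,
        N * Nᴴ = ((n : ℂ))⁻¹ • (1 : Matrix (Fin n) (Fin n) ℂ) ∧
        r = ‖(Nᴴ * M).trace‖ ^ 2}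
      ((1 / n) * (∑ i, schmidtCoeffs M i) ^ 2) := by
  obtain ⟨P, W, hPP, hP'P, hWW, hW'W, hM⟩ := schmidt_decomp M
  set lam : Fin n → ℝ := schmidtCoeffs M with hlam
  set D : Matrix (Fin n) (Fin n) ℂ := diagonal (fun i => ((lam i : ℂ))) with hD
  have hlam_nonneg : ∀ i, 0 ≤ lam i := fun i => Real.sqrt_nonneg _
  have hsum_nonneg : 0 ≤ ∑ i, lam i := Finset.sum_nonneg fun i _ => hlam_nonneg i
  have hn' : (0:ℝ) < n := Nat.cast_pos.mpr hn
  set c : ℝ := (Real.sqrt n)⁻¹ with hc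
  have hsq : 0 < Real.sqrt n := Real.sqrt_pos.mpr hn'
  have hc_nonneg : 0 ≤ c := inv_nonneg.mpr hsq.le
  have hc2 : c * c = (n:ℝ)⁻¹ := by
    rw [hc, ← mul_inv, Real.mul_self_sqrt hn'.le]
  constructor
  · refine ⟨(c : ℂ) • (P * W), ?_, ?_⟩
    · have h1 : ((c:ℂ) • (P * W)) * ((c:ℂ) • (P * W))ᴴ
          = ((c:ℂ) * star (c:ℂ)) • ((P * W) * (Wᴴ * Pᴴ)) := by
        rw [conjTranspose_smul, conjTranspose_mul, smul_mul_assoc, mul_smul_comm, smul_smul]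
      rw [h1, show (P * W) * (Wᴴ * Pᴴ) = P * (W * Wᴴ) * Pᴴ by noncomm_ring, hWW, mul_one, hPP]
      congr 1
      rw [show star ((c:ℂ)) = ((c:ℂ)) from Complex.conj_ofReal _, ← Complex.ofReal_mul, hc2]
      push_cast
      ring
    · have h2 : ((c:ℂ) • (P * W))ᴴ * M = (c:ℂ) • (Wᴴ * D * W) := by
        rw [conjTranspose_smul, conjTranspose_mul, hM,
          show star ((c:ℂ)) = ((c:ℂ)) from Complex.conj_ofReal _, smul_mul_assoc]
        congr 1
        rw [show Wᴴ * Pᴴ * (P * D * W) = Wᴴ * ((Pᴴ * P) * D) * W by noncomm_ring, hP'P, one_mul]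
      have h3 : (Wᴴ * D * W).trace = D.trace := by
        rw [Matrix.trace_mul_cycle, hWW, one_mul]
      have htrD : D.trace = ((∑ i, lam i : ℝ) : ℂ) := by
        rw [hD, Matrix.trace_diagonal]
        norm_cast
      rw [h2, Matrix.trace_smul, h3, htrD, smul_eq_mul, ← Complex.ofReal_mul, Complex.norm_real, Real.norm_eq_abs,
        abs_of_nonneg (mul_nonneg hc_nonneg hsum_nonneg)]
      have hcc : c ^ 2 = 1 / (n:ℝ) := by rw [sq, hc2, one_div]
      rw [mul_pow, hcc]
  · rintro r ⟨N, hN, rfl⟩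
    set C : Matrix (Fin n) (Fin n) ℂ := W * Nᴴ * P with hCdef
    have hCC : Cᴴ * C = ((n:ℂ))⁻¹ • 1 := by
      have h1 : Cᴴ = Pᴴ * N * Wᴴ := by
        rw [hCdef, conjTranspose_mul, conjTranspose_mul, conjTranspose_conjTranspose]
        noncomm_ring
      rw [h1, hCdef,
        show Pᴴ * N * Wᴴ * (W * Nᴴ * P) = Pᴴ * (N * (Wᴴ * W) * Nᴴ) * P by noncomm_ring,
        hW'W, mul_one, hN, mul_smul_comm, smul_mul_assoc, mul_one, hP'P]
    have habs : ∀ i, ‖C i i‖ ≤ c := by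
      intro i
      have h1 : (Cᴴ * C) i i = ((n:ℂ))⁻¹ := by
        rw [hCC]
        simp
      rw [Matrix.mul_apply] at h1
      simp only [conjTranspose_apply] at h1
      have h2 : ∑ j, (Complex.normSq (C j i) : ℂ) = (((n:ℝ)⁻¹ : ℝ) : ℂ) := by
        rw [show (((n:ℝ)⁻¹ : ℝ) : ℂ) = ((n:ℂ))⁻¹ by push_cast; ring, ← h1]
        exact Finset.sum_congr rfl fun j _ =>
          ((Complex.mul_conj (C j i)).symm.trans (mul_comm _ _))
      rw [← Complex.ofReal_sum] at h2
      have h3 : ∑ j, Complex.normSq (C j i) = (n:ℝ)⁻¹ := Complex.ofReal_injective h2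
      have h4 : Complex.normSq (C i i) ≤ (n:ℝ)⁻¹ := by
        rw [← h3]
        exact Finset.single_le_sum (f := fun j => Complex.normSq (C j i))
          (fun j _ => Complex.normSq_nonneg _) (Finset.mem_univ i)
      have h5 : ‖C i i‖ = Real.sqrt (Complex.normSq (C i i)) := by
        rw [Complex.norm_def]
      rw [h5, hc, ← Real.sqrt_inv]
      exact Real.sqrt_le_sqrt h4
    have htr : (Nᴴ * M).trace = (C * D).trace := by
      rw [hM, show Nᴴ * (P * D * W) = (Nᴴ * P * D) * W by noncomm_ring,
        Matrix.trace_mul_comm, hCdef]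
      congr 1
      noncomm_ring
    have htr2 : (C * D).trace = ∑ i, C i i * ((lam i : ℂ)) := by
      rw [Matrix.trace]
      exact Finset.sum_congr rfl fun i _ => by rw [Matrix.diag_apply, hD, Matrix.mul_diagonal]
    have hbound : ‖(Nᴴ * M).trace‖ ≤ c * ∑ i, lam i := by
      rw [htr, htr2]
      calc ‖∑ i, C i i * ((lam i : ℂ))‖
          ≤ ∑ i, ‖C i i * ((lam i : ℂ))‖ := by
            exact norm_sum_le _ _
        _ = ∑ i, ‖C i i‖ * lam i := by
            refine Finset.sum_congr rfl fun i _ => ?_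
            rw [norm_mul, Complex.norm_real, Real.norm_eq_abs, abs_of_nonneg (hlam_nonneg i)]
        _ ≤ ∑ i, c * lam i := by
            refine Finset.sum_le_sum fun i _ => ?_
            exact mul_le_mul_of_nonneg_right (habs i) (hlam_nonneg i)
        _ = c * ∑ i, lam i := by rw [Finset.mul_sum]
    calc ‖(Nᴴ * M).trace‖ ^ 2
        ≤ (c * ∑ i, lam i) ^ 2 := by
          exact pow_le_pow_left₀ (norm_nonneg _) hbound 2
      _ = (1 / n) * (∑ i, lam i) ^ 2 := by
          have : c ^ 2 = 1 / (n:ℝ) := by rw [sq, hc2, one_div]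
          rw [mul_pow, this]
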